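/- For every g = (z,t) ∈ V₁ × V₂ with g ≠ (0,0): XN(g) = N(g)⁻³ A(g). If moreover the data is of Heisenberg type, then |XN(g)|² = ψ(g) N(g)⁻². -/

import Mathlib

open scoped RealInnerProductSpace
open MeasureTheory

noncomputable section

variable {V₁ V₂ : Type*} [NormedAddCommGroup V₁] [InnerProductSpace ℝ V₁]
  [NormedAddCommGroup V₂] [InnerProductSpace ℝ V₂]

/-- The horizontal derivative of `f : V₁ × V₂ → ℝ` at `g = (z,t)` in the horizontal
direction `v ∈ V₁`, namely `Df(g)(v, ½[z,v])`. -/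
def Xd (b : V₁ →ₗ[ℝ] V₁ →ₗ[ℝ] V₂) (v : V₁) (f : V₁ × V₂ → ℝ) (g : V₁ × V₂) : ℝ :=
  fderiv ℝ f g (v, (2⁻¹ : ℝ) • b g.1 v)

/-- The horizontal gradient: the unique vector of `V₁` representing the linear functional
`v ↦ X_v f (g)` via the inner product of `V₁`. -/
def Xgrad [FiniteDimensional ℝ V₁] [FiniteDimensional ℝ V₂]
    (b : V₁ →ₗ[ℝ] V₁ →ₗ[ℝ] V₂) (f : V₁ × V₂ → ℝ) (g : V₁ × V₂) : V₁ :=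
  (InnerProductSpace.toDual ℝ V₁).symm
    (LinearMap.toContinuousLinearMap
      ((fderiv ℝ f g).toLinearMap.comp
        (LinearMap.prod LinearMap.id ((2⁻¹ : ℝ) • b g.1))))

/-- The symmetrized second horizontal derivative `f_{,uv} = ½(X_u X_v f + X_v X_u f)`. -/
def X2sym (b : V₁ →ₗ[ℝ] V₁ →ₗ[ℝ] V₂) (u v : V₁) (f : V₁ × V₂ → ℝ) (g : V₁ × V₂) : ℝ :=
  (Xd b u (Xd b v f) g + Xd b v (Xd b u f) g) / 2

/-- The horizontal (sub-)Laplacian `𝓛 f = Σᵢ X_{eᵢ} X_{eᵢ} f`. -/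
def hLap [FiniteDimensional ℝ V₁] (b : V₁ →ₗ[ℝ] V₁ →ₗ[ℝ] V₂) (f : V₁ × V₂ → ℝ)
    (g : V₁ × V₂) : ℝ :=
  ∑ i, Xd b (stdOrthonormalBasis ℝ V₁ i) (Xd b (stdOrthonormalBasis ℝ V₁ i) f) g

/-- The horizontal ∞-Laplacian `𝓛_∞ f = Σ_{i,j} f_{,eᵢeⱼ} X_{eᵢ}f X_{eⱼ}f`. -/
def hInfLap [FiniteDimensional ℝ V₁] (b : V₁ →ₗ[ℝ] V₁ →ₗ[ℝ] V₂) (f : V₁ × V₂ → ℝ)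
    (g : V₁ × V₂) : ℝ :=
  ∑ i, ∑ j, X2sym b (stdOrthonormalBasis ℝ V₁ i) (stdOrthonormalBasis ℝ V₁ j) f g *
    Xd b (stdOrthonormalBasis ℝ V₁ i) f g * Xd b (stdOrthonormalBasis ℝ V₁ j) f g

/-- `ψ(z,t) = |z|²`. -/
def psiF (g : V₁ × V₂) : ℝ := ‖g.1‖ ^ 2

/-- `χ(z,t) = |t|²`. -/
def chiF (g : V₁ × V₂) : ℝ := ‖g.2‖ ^ 2

/-- `a(z,t) = ψ² + 16χ = |z|⁴ + 16|t|²`. -/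
def aF (g : V₁ × V₂) : ℝ := psiF g ^ 2 + 16 * chiF g

/-- The Folland–Kaplan gauge `N = a^{1/4}`. -/
def Ng (g : V₁ × V₂) : ℝ := aF g ^ ((1 : ℝ) / 4)

/-- `A(z,t) = |z|² z + 4 J(t) z`. -/
def Ag (J : V₂ → V₁ →ₗ[ℝ] V₁) (g : V₁ × V₂) : V₁ :=
  ‖g.1‖ ^ 2 • g.1 + (4 : ℝ) • J g.2 g.1

/-- The group law `(z,t)·(z',t') = (z+z', t+t'+½[z,z'])`. -/
def gmul (b : V₁ →ₗ[ℝ] V₁ →ₗ[ℝ] V₂) (g h : V₁ × V₂) : V₁ × V₂ :=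
  (g.1 + h.1, g.2 + h.2 + (2⁻¹ : ℝ) • b g.1 h.1)

/-- The group inverse `(z,t)⁻¹ = (−z,−t)`. -/
def ginv (g : V₁ × V₂) : V₁ × V₂ := (-g.1, -g.2)

end

/-!
Since `N⁴ = a`, the chain rule gives `X_v N = ¼ N⁻³ X_v a`, and `X_v a = 4|z|²⟨z, v⟩ + 32⟨t, ½[z,v]⟩
= 4⟨|z|² z + 4 J(t) z, v⟩`, which is the gradient formula. Skew-symmetry makes `J(t) z ⟂ z`, so in
the H-type case `|A|² = |z|⁶ + 16|t|²|z|² = ψ a = ψ N⁴`.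
-/

open ContinuousLinearMap

section

variable {V₁ V₂ : Type*} [NormedAddCommGroup V₁] [NormedAddCommGroup V₂]

lemma aF_nonneg (g : V₁ × V₂) : 0 ≤ aF g := by
  unfold aF chiF; positivity

lemma aF_pos {g : V₁ × V₂} (hg : g ≠ 0) : 0 < aF g := by
  obtain hz | ht : g.1 ≠ 0 ∨ g.2 ≠ 0 := by
    by_contra! h; exact hg (Prod.ext h.1 h.2)
  · have : 0 < psiF g := by unfold psiF; positivity
    unfold aF chiF; positivity
  · have : 0 < chiF g := by unfold chiF; positivity
    unfold aF psiF; positivity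

lemma Ng_pos {g : V₁ × V₂} (hg : g ≠ 0) : 0 < Ng g :=
  Real.rpow_pos_of_pos (aF_pos hg) _

lemma Ng_pow_four (g : V₁ × V₂) : Ng g ^ 4 = aF g := by
  rw [Ng, ← Real.rpow_natCast, ← Real.rpow_mul (aF_nonneg g)]
  norm_num

lemma inv_Ng_pow_three (g : V₁ × V₂) : (Ng g ^ 3)⁻¹ = aF g ^ ((1 : ℝ) / 4 - 1) := by
  rw [Ng, ← Real.rpow_natCast, ← Real.rpow_mul (aF_nonneg g), ← Real.rpow_neg (aF_nonneg g)]
  norm_num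

variable [InnerProductSpace ℝ V₁] [InnerProductSpace ℝ V₂]

lemma inner_Xgrad [FiniteDimensional ℝ V₁] [FiniteDimensional ℝ V₂]
    (b : V₁ →ₗ[ℝ] V₁ →ₗ[ℝ] V₂) (f : V₁ × V₂ → ℝ) (g : V₁ × V₂) (v : V₁) :
    ⟪Xgrad b f g, v⟫ = Xd b v f g :=
  InnerProductSpace.toDual_symm_apply

lemma hasFDerivAt_aF (g : V₁ × V₂) :
    HasFDerivAt aF ((4 * ‖g.1‖ ^ 2) • (innerSL ℝ g.1).comp (fst ℝ V₁ V₂) +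
      (32 : ℝ) • (innerSL ℝ g.2).comp (snd ℝ V₁ V₂)) g := by
  have hψ := (hasFDerivAt_fst (𝕜 := ℝ) (p := g)).norm_sq
  have hχ := (hasFDerivAt_snd (𝕜 := ℝ) (p := g)).norm_sq
  refine ((hψ.pow 2).add (hχ.const_mul (16 : ℝ))).congr_fderiv ?_
  ext p <;> simp <;> ring

lemma fderiv_Ng_apply {g : V₁ × V₂} (hg : g ≠ 0) (v : V₁) (s : V₂) :
    fderiv ℝ Ng g (v, s) = (Ng g ^ 3)⁻¹ * (‖g.1‖ ^ 2 * ⟪g.1, v⟫ + 8 * ⟪g.2, s⟫) := by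
  have hNg : HasFDerivAt Ng _ g :=
    (Real.hasDerivAt_rpow_const (p := 1 / 4) (Or.inl (aF_pos hg).ne')).comp_hasFDerivAt g
      (hasFDerivAt_aF g)
  rw [hNg.fderiv, inv_Ng_pow_three]
  simp only [smul_apply, add_apply, coe_comp, Function.comp_apply, coe_fst', coe_snd',
    innerSL_apply_apply, smul_eq_mul]
  ring

lemma Xgrad_Ng [FiniteDimensional ℝ V₁] [FiniteDimensional ℝ V₂]
    {b : V₁ →ₗ[ℝ] V₁ →ₗ[ℝ] V₂} {J : V₂ → V₁ →ₗ[ℝ] V₁}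
    (hJ : ∀ (t : V₂) (z z' : V₁), ⟪J t z, z'⟫ = ⟪b z z', t⟫) {g : V₁ × V₂} (hg : g ≠ 0) :
    Xgrad b Ng g = (Ng g ^ 3)⁻¹ • Ag J g := by
  refine ext_inner_right ℝ fun v => ?_
  rw [inner_Xgrad, Xd, fderiv_Ng_apply hg, real_inner_smul_left, Ag, inner_add_left,
    real_inner_smul_left, real_inner_smul_left, hJ, real_inner_smul_right, real_inner_comm g.2]
  ring

lemma inner_J_self {b : V₁ →ₗ[ℝ] V₁ →ₗ[ℝ] V₂} (hskew : ∀ z z' : V₁, b z z' = - b z' z)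
    {J : V₂ → V₁ →ₗ[ℝ] V₁} (hJ : ∀ (t : V₂) (z z' : V₁), ⟪J t z, z'⟫ = ⟪b z z', t⟫)
    (t : V₂) (z : V₁) : ⟪J t z, z⟫ = 0 := by
  have : IsAddTorsionFree V₂ := .of_isTorsionFree ℝ V₂
  rw [hJ, self_eq_neg.mp (hskew z z), inner_zero_left]

lemma norm_Ag_sq {b : V₁ →ₗ[ℝ] V₁ →ₗ[ℝ] V₂} (hskew : ∀ z z' : V₁, b z z' = - b z' z)
    {J : V₂ → V₁ →ₗ[ℝ] V₁} (hJ : ∀ (t : V₂) (z z' : V₁), ⟪J t z, z'⟫ = ⟪b z z', t⟫)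
    (hH : ∀ (t : V₂) (z : V₁), ‖J t z‖ = ‖t‖ * ‖z‖) (g : V₁ × V₂) :
    ‖Ag J g‖ ^ 2 = psiF g * aF g := by
  rw [Ag, norm_add_sq_real, real_inner_smul_left, real_inner_smul_right, real_inner_comm,
    inner_J_self hskew hJ, norm_smul, norm_smul, hH, aF, psiF, chiF]
  simp only [Real.norm_eq_abs, abs_pow, abs_norm]
  ring

end

theorem riesz_htype_grad_N_general {V₁ V₂ : Type*} [NormedAddCommGroup V₁] [InnerProductSpace ℝ V₁]
    [FiniteDimensional ℝ V₁] [NormedAddCommGroup V₂] [InnerProductSpace ℝ V₂]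
    [FiniteDimensional ℝ V₂]
    (b : V₁ →ₗ[ℝ] V₁ →ₗ[ℝ] V₂) (hskew : ∀ z z' : V₁, b z z' = - b z' z)
    (J : V₂ → V₁ →ₗ[ℝ] V₁) (hJ : ∀ (t : V₂) (z z' : V₁), ⟪J t z, z'⟫ = ⟪b z z', t⟫) :
    (∀ g : V₁ × V₂, g ≠ (0, 0) → Xgrad b Ng g = ((Ng g) ^ 3)⁻¹ • Ag J g) ∧
    ((∀ (t : V₂) (z : V₁), ‖J t z‖ = ‖t‖ * ‖z‖) →
      ∀ g : V₁ × V₂, g ≠ (0, 0) → ‖Xgrad b Ng g‖ ^ 2 = psiF g * ((Ng g) ^ 2)⁻¹) := by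
  refine ⟨fun g hg => Xgrad_Ng hJ hg, fun hH g hg => ?_⟩
  have hN := Ng_pos hg
  rw [Xgrad_Ng hJ hg, norm_smul, mul_pow, norm_Ag_sq hskew hJ hH, ← Ng_pow_four, norm_inv,
    Real.norm_of_nonneg (by positivity)]
  field_simp

theorem riesz_htype_grad_N {V₁ V₂ : Type*} [NormedAddCommGroup V₁] [InnerProductSpace ℝ V₁]
    [FiniteDimensional ℝ V₁] [NormedAddCommGroup V₂] [InnerProductSpace ℝ V₂]
    [FiniteDimensional ℝ V₂] (m k : ℕ) (hm : 1 ≤ m) (hk : 1 ≤ k)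
    (hdV₁ : Module.finrank ℝ V₁ = m) (hdV₂ : Module.finrank ℝ V₂ = k)
    (b : V₁ →ₗ[ℝ] V₁ →ₗ[ℝ] V₂) (hskew : ∀ z z' : V₁, b z z' = - b z' z)
    (J : V₂ → V₁ →ₗ[ℝ] V₁) (hJ : ∀ (t : V₂) (z z' : V₁), ⟪J t z, z'⟫ = ⟪b z z', t⟫) :
    (∀ g : V₁ × V₂, g ≠ (0, 0) → Xgrad b Ng g = ((Ng g) ^ 3)⁻¹ • Ag J g) ∧
    ((∀ (t : V₂) (z : V₁), ‖J t z‖ = ‖t‖ * ‖z‖) →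
      ∀ g : V₁ × V₂, g ≠ (0, 0) → ‖Xgrad b Ng g‖ ^ 2 = psiF g * ((Ng g) ^ 2)⁻¹) :=
  riesz_htype_grad_N_general b hskew J hJ
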